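/- Let N ≥ 1 be an integer, q ∈ ℂ nonzero, 0 ≤ k ≤ N−1, and let 1 ≤ i ≤ s be integers. Then in F_q(N): z_k^i (z_k^*)^s = (z_k^*)^s z_k^i + Σ_{j=1}^{i} d_{i,j}(s) Ω_{k+1}^j (z_k^*)^{s−j} z_k^{i−j}, where each Laurent polynomial d_{i,j}(s) is evaluated at q. -/

import Mathlib

open FreeAlgebra

/-- Generators of `F_q(N)`: `Sum.inl i` is `z_i` and `Sum.inr i` is `z_i^*`. -/
abbrev FqGen (N : ℕ) : Type := Fin N ⊕ Fin N

/-- The defining relations of `F_q(N)`. -/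
inductive FqRel (N : ℕ) (q : ℂ) : FreeAlgebra ℂ (FqGen N) → FreeAlgebra ℂ (FqGen N) → Prop
  | zz (i j : Fin N) (h : i < j) :
      FqRel N q (ι ℂ (Sum.inl i) * ι ℂ (Sum.inl j))
        (q⁻¹ • (ι ℂ (Sum.inl j) * ι ℂ (Sum.inl i)))
  | ss (i j : Fin N) (h : i < j) :
      FqRel N q (ι ℂ (Sum.inr i) * ι ℂ (Sum.inr j))
        (q • (ι ℂ (Sum.inr j) * ι ℂ (Sum.inr i)))
  | zs (i j : Fin N) (h : i ≠ j) :
      FqRel N q (ι ℂ (Sum.inl i) * ι ℂ (Sum.inr j))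
        (q⁻¹ • (ι ℂ (Sum.inr j) * ι ℂ (Sum.inl i)))
  | heis (i : Fin N) :
      FqRel N q (ι ℂ (Sum.inl i) * ι ℂ (Sum.inr i) - ι ℂ (Sum.inr i) * ι ℂ (Sum.inl i))
        ((q ^ 2 - 1) • ∑ k ∈ Finset.univ.filter (fun k : Fin N => i < k),
            ι ℂ (Sum.inl k) * ι ℂ (Sum.inr k))

/-- The algebra `F_q(N)`: the quotient of the free algebra by (the two-sided ideal
generated by) the defining relations. -/
abbrev Fq (N : ℕ) (q : ℂ) : Type := RingQuot (FqRel N q)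

/-- The generator `z_i` of `F_q(N)`. -/
noncomputable def zGen (N : ℕ) (q : ℂ) (i : Fin N) : Fq N q :=
  RingQuot.mkAlgHom ℂ (FqRel N q) (ι ℂ (Sum.inl i))

/-- The generator `z_i^*` of `F_q(N)`. -/
noncomputable def zsGen (N : ℕ) (q : ℂ) (i : Fin N) : Fq N q :=
  RingQuot.mkAlgHom ℂ (FqRel N q) (ι ℂ (Sum.inr i))


/-- `Ω_i = Σ_{k ≥ i} z_k z_k^*` (so `Ω_N = 0` and `Ω = Ω_0`). -/
noncomputable def OmegaEl (N : ℕ) (q : ℂ) (i : ℕ) : Fq N q :=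
  ∑ k ∈ Finset.univ.filter (fun k : Fin N => i ≤ (k : ℕ)), zGen N q k * zsGen N q k

/-- The coefficients `c_{i,j}` (the Laurent polynomials of the paper, evaluated at `q`):
`c_{i,0} = 1`, `c_{0,j} = 0` for `j ≥ 1`, and `c_{i+1,j} = q^{−2j} c_{i,j} + q^{−2(j−1)} c_{i,j−1}`. -/
noncomputable def cCoef (q : ℂ) : ℕ → ℕ → ℂ
  | _, 0 => 1
  | 0, _ + 1 => 0
  | i + 1, j + 1 => (q ^ (2 * (j + 1)))⁻¹ * cCoef q i (j + 1) + (q ^ (2 * j))⁻¹ * cCoef q i j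

/-- `d_{i,j}(s) = (q^{2s} − 1)(q^{2(s−1)} − 1) ⋯ (q^{2(s+1−j)} − 1) c_{i,j}`. -/
noncomputable def dCoef (q : ℂ) (i j s : ℕ) : ℂ :=
  (∏ t ∈ Finset.range j, (q ^ (2 * (s - t)) - 1)) * cCoef q i j


section Aux

variable (N : ℕ) (q : ℂ)

lemma cCoef_eq_zero (i : ℕ) : ∀ j : ℕ, i < j → cCoef q i j = 0 := by
  induction i with
  | zero =>
    intro j hj
    match j with
    | j + 1 => simp [cCoef]
  | succ i ih =>
    intro j hj
    match j with
    | j + 1 =>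
      have h1 : cCoef q i (j + 1) = 0 := ih _ (by omega)
      have h2 : cCoef q i j = 0 := ih _ (by omega)
      simp [cCoef, h1, h2]

lemma dCoef_zero_right (i s : ℕ) : dCoef q i 0 s = 1 := by
  simp [dCoef, cCoef]

lemma dCoef_eq_zero {i j : ℕ} (h : i < j) (s : ℕ) : dCoef q i j s = 0 := by
  simp [dCoef, cCoef_eq_zero q i j h]

lemma dCoef_rec (i j s : ℕ) :
    dCoef q (i + 1) (j + 1) s =
      (q ^ (2 * (j + 1)))⁻¹ * dCoef q i (j + 1) s +
        (q ^ (2 * j))⁻¹ * (q ^ (2 * (s - j)) - 1) * dCoef q i j s := by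
  show (∏ t ∈ Finset.range (j + 1), (q ^ (2 * (s - t)) - 1)) * cCoef q (i + 1) (j + 1) = _
  rw [Finset.prod_range_succ]
  show _ * ((q ^ (2 * (j + 1)))⁻¹ * cCoef q i (j + 1) + (q ^ (2 * j))⁻¹ * cCoef q i j) = _
  unfold dCoef
  rw [Finset.prod_range_succ]
  ring

lemma rel_zz {i j : Fin N} (h : i < j) :
    zGen N q i * zGen N q j = q⁻¹ • (zGen N q j * zGen N q i) := by
  have := RingQuot.mkAlgHom_rel ℂ (FqRel.zz (N := N) (q := q) i j h)
  simpa [zGen, map_mul, map_smul] using this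

lemma rel_ss {i j : Fin N} (h : i < j) :
    zsGen N q i * zsGen N q j = q • (zsGen N q j * zsGen N q i) := by
  have := RingQuot.mkAlgHom_rel ℂ (FqRel.ss (N := N) (q := q) i j h)
  simpa [zsGen, map_mul, map_smul] using this

lemma rel_zs {i j : Fin N} (h : i ≠ j) :
    zGen N q i * zsGen N q j = q⁻¹ • (zsGen N q j * zGen N q i) := by
  have := RingQuot.mkAlgHom_rel ℂ (FqRel.zs (N := N) (q := q) i j h)
  simpa [zGen, zsGen, map_mul, map_smul] using this

lemma rel_sz (hq : q ≠ 0) {i j : Fin N} (h : i ≠ j) :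
    zsGen N q j * zGen N q i = q • (zGen N q i * zsGen N q j) := by
  rw [rel_zs N q h, smul_smul, mul_inv_cancel₀ hq, one_smul]

lemma rel_heis (k : Fin N) :
    zGen N q k * zsGen N q k =
      zsGen N q k * zGen N q k + (q ^ 2 - 1) • OmegaEl N q ((k : ℕ) + 1) := by
  have h := RingQuot.mkAlgHom_rel ℂ (FqRel.heis (N := N) (q := q) k)
  simp only [map_sub, map_mul, map_smul, map_sum] at h
  have hfil : (Finset.univ.filter (fun m : Fin N => k < m)) =
      (Finset.univ.filter (fun m : Fin N => (k : ℕ) + 1 ≤ (m : ℕ))) := by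
    apply Finset.filter_congr
    intro m _
    exact Fin.lt_def.trans Nat.lt_iff_add_one_le
  rw [hfil] at h
  have h' : zGen N q k * zsGen N q k - zsGen N q k * zGen N q k =
      (q ^ 2 - 1) • OmegaEl N q ((k : ℕ) + 1) := by
    simpa [zGen, zsGen, OmegaEl, Finset.smul_sum] using h
  linear_combination (norm := module) h'

lemma z_omega (k : Fin N) :
    zGen N q k * OmegaEl N q ((k : ℕ) + 1) =
      (q ^ 2)⁻¹ • (OmegaEl N q ((k : ℕ) + 1) * zGen N q k) := by
  unfold OmegaEl
  rw [Finset.mul_sum, Finset.sum_mul, Finset.smul_sum]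
  refine Finset.sum_congr rfl ?_
  intro m hm
  have hkm : k < m := by
    simp only [Finset.mem_filter, Finset.mem_univ, true_and] at hm
    exact Fin.lt_def.mpr (by omega)
  rw [← mul_assoc, rel_zz N q hkm, smul_mul_assoc, mul_assoc, rel_zs N q (ne_of_lt hkm),
    mul_smul_comm, smul_smul, ← mul_assoc]
  congr 1
  rw [sq, mul_inv]

lemma w_omega (hq : q ≠ 0) (k : Fin N) :
    zsGen N q k * OmegaEl N q ((k : ℕ) + 1) =
      q ^ 2 • (OmegaEl N q ((k : ℕ) + 1) * zsGen N q k) := by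
  unfold OmegaEl
  rw [Finset.mul_sum, Finset.sum_mul, Finset.smul_sum]
  refine Finset.sum_congr rfl ?_
  intro m hm
  have hkm : k < m := by
    simp only [Finset.mem_filter, Finset.mem_univ, true_and] at hm
    exact Fin.lt_def.mpr (by omega)
  rw [← mul_assoc, rel_sz N q hq (ne_of_lt hkm).symm, smul_mul_assoc, mul_assoc,
    rel_ss N q hkm, mul_smul_comm, smul_smul, ← mul_assoc]
  congr 1
  rw [sq]

lemma z_omega_pow (k : Fin N) (j : ℕ) :
    zGen N q k * OmegaEl N q ((k : ℕ) + 1) ^ j =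
      ((q ^ 2)⁻¹) ^ j • (OmegaEl N q ((k : ℕ) + 1) ^ j * zGen N q k) := by
  induction j with
  | zero => simp
  | succ j ih =>
    rw [pow_succ, ← mul_assoc, ih, smul_mul_assoc, mul_assoc, z_omega N q k,
      mul_smul_comm, smul_smul, ← mul_assoc, ← pow_succ, ← pow_succ]

lemma wpow_omega (hq : q ≠ 0) (k : Fin N) (n : ℕ) :
    zsGen N q k ^ n * OmegaEl N q ((k : ℕ) + 1) =
      (q ^ 2) ^ n • (OmegaEl N q ((k : ℕ) + 1) * zsGen N q k ^ n) := by
  induction n with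
  | zero => simp
  | succ n ih =>
    rw [pow_succ, mul_assoc, w_omega N q hq k, mul_smul_comm, ← mul_assoc, ih,
      smul_mul_assoc, smul_smul, mul_assoc, ← pow_succ, ← pow_succ']

lemma z_wpow (hq : q ≠ 0) (k : Fin N) (n : ℕ) :
    zGen N q k * zsGen N q k ^ (n + 1) =
      zsGen N q k ^ (n + 1) * zGen N q k +
        ((q ^ 2) ^ (n + 1) - 1) • (OmegaEl N q ((k : ℕ) + 1) * zsGen N q k ^ n) := by
  induction n with
  | zero =>
    simpa using rel_heis N q k
  | succ n ih =>
    set z := zGen N q k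
    set w := zsGen N q k
    set Om := OmegaEl N q ((k : ℕ) + 1)
    calc z * w ^ (n + 1 + 1)
        = (z * w ^ (n + 1)) * w := by rw [pow_succ, ← mul_assoc]
      _ = (w ^ (n + 1) * z) * w + ((q ^ 2) ^ (n + 1) - 1) • ((Om * w ^ n) * w) := by
          rw [ih, add_mul, smul_mul_assoc]
      _ = w ^ (n + 1) * (z * w) + ((q ^ 2) ^ (n + 1) - 1) • (Om * w ^ (n + 1)) := by
          rw [mul_assoc (w ^ (n + 1)), mul_assoc Om, ← pow_succ]
      _ = w ^ (n + 1) * (w * z) + (q ^ 2 - 1) • (w ^ (n + 1) * Om) +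
            ((q ^ 2) ^ (n + 1) - 1) • (Om * w ^ (n + 1)) := by
          rw [rel_heis N q k, mul_add, mul_smul_comm]
      _ = w ^ (n + 1 + 1) * z + ((q ^ 2 - 1) * (q ^ 2) ^ (n + 1)) • (Om * w ^ (n + 1)) +
            ((q ^ 2) ^ (n + 1) - 1) • (Om * w ^ (n + 1)) := by
          rw [← mul_assoc, ← pow_succ, wpow_omega N q hq k (n + 1), smul_smul]
      _ = w ^ (n + 1 + 1) * z + ((q ^ 2) ^ (n + 1 + 1) - 1) • (Om * w ^ (n + 1)) := by
          rw [add_assoc, ← add_smul]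
          congr 1
          ring

lemma key_term (hq : q ≠ 0) (k : Fin N) (j m n : ℕ) :
    zGen N q k * (OmegaEl N q ((k : ℕ) + 1) ^ j * zsGen N q k ^ (n + 1) * zGen N q k ^ m) =
      ((q ^ 2)⁻¹) ^ j •
          (OmegaEl N q ((k : ℕ) + 1) ^ j * zsGen N q k ^ (n + 1) * zGen N q k ^ (m + 1)) +
        (((q ^ 2)⁻¹) ^ j * ((q ^ 2) ^ (n + 1) - 1)) •
          (OmegaEl N q ((k : ℕ) + 1) ^ (j + 1) * zsGen N q k ^ n * zGen N q k ^ m) := by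
  set z := zGen N q k
  set w := zsGen N q k
  set Om := OmegaEl N q ((k : ℕ) + 1)
  calc z * (Om ^ j * w ^ (n + 1) * z ^ m)
      = (z * Om ^ j) * (w ^ (n + 1) * z ^ m) := by
        rw [← mul_assoc, ← mul_assoc, mul_assoc (z * Om ^ j)]
    _ = ((q ^ 2)⁻¹) ^ j • (Om ^ j * ((z * w ^ (n + 1)) * z ^ m)) := by
        rw [z_omega_pow N q k j, smul_mul_assoc, mul_assoc, ← mul_assoc z]
    _ = ((q ^ 2)⁻¹) ^ j • (Om ^ j * ((w ^ (n + 1) * z +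
          ((q ^ 2) ^ (n + 1) - 1) • (Om * w ^ n)) * z ^ m)) := by
        rw [z_wpow N q hq k n]
    _ = _ := by
        rw [add_mul, mul_add, smul_add, smul_mul_assoc, mul_smul_comm, smul_smul]
        congr 1
        · congr 1
          rw [mul_assoc, mul_assoc, ← pow_succ', ← mul_assoc]
        · congr 1
          rw [← mul_assoc, ← mul_assoc, ← pow_succ]

lemma main_aux (hq : q ≠ 0) (k : Fin N) (s : ℕ) :
    ∀ i : ℕ, i ≤ s →
      zGen N q k ^ i * zsGen N q k ^ s =
        ∑ j ∈ Finset.range (i + 1),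
          dCoef q i j s •
            (OmegaEl N q ((k : ℕ) + 1) ^ j * zsGen N q k ^ (s - j) * zGen N q k ^ (i - j)) := by
  intro i
  induction i with
  | zero =>
    intro _
    simp [dCoef_zero_right]
  | succ i ih =>
    intro his
    set z := zGen N q k
    set w := zsGen N q k
    set Om := OmegaEl N q ((k : ℕ) + 1)
    have hIH := ih (by omega)
    have h1 : z ^ (i + 1) * w ^ s =
        ∑ j ∈ Finset.range (i + 1),
          dCoef q i j s • (z * (Om ^ j * w ^ (s - j) * z ^ (i - j))) := by
      rw [pow_succ', mul_assoc, hIH, Finset.mul_sum]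
      exact Finset.sum_congr rfl fun j _ => mul_smul_comm _ _ _
    rw [h1]
    have h2 : ∀ j ∈ Finset.range (i + 1),
        dCoef q i j s • (z * (Om ^ j * w ^ (s - j) * z ^ (i - j))) =
          (dCoef q i j s * ((q ^ 2)⁻¹) ^ j) • (Om ^ j * w ^ (s - j) * z ^ (i + 1 - j)) +
            (dCoef q i j s * (((q ^ 2)⁻¹) ^ j * ((q ^ 2) ^ (s - j) - 1))) •
              (Om ^ (j + 1) * w ^ (s - (j + 1)) * z ^ (i - j)) := by
      intro j hj
      have hjle : j ≤ i := by simpa using Nat.lt_succ_iff.mp (Finset.mem_range.mp hj)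
      have hsj : s - j = (s - j - 1) + 1 := by omega
      have hsj' : s - (j + 1) = s - j - 1 := by omega
      have hij : i + 1 - j = (i - j) + 1 := by omega
      rw [hsj, hsj', hij, key_term N q hq k j (i - j) (s - j - 1), smul_add,
        smul_smul, smul_smul]
    rw [Finset.sum_congr rfl h2, Finset.sum_add_distrib]
    have h3 : ∑ j ∈ Finset.range (i + 1),
        (dCoef q i j s * ((q ^ 2)⁻¹) ^ j) • (Om ^ j * w ^ (s - j) * z ^ (i + 1 - j)) =
        (dCoef q i 0 s * ((q ^ 2)⁻¹) ^ 0) • (Om ^ 0 * w ^ (s - 0) * z ^ (i + 1 - 0)) +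
          ∑ j ∈ Finset.range (i + 1),
            (dCoef q i (j + 1) s * ((q ^ 2)⁻¹) ^ (j + 1)) •
              (Om ^ (j + 1) * w ^ (s - (j + 1)) * z ^ (i + 1 - (j + 1))) := by
      rw [Finset.sum_range_succ' (fun j =>
        (dCoef q i j s * ((q ^ 2)⁻¹) ^ j) • (Om ^ j * w ^ (s - j) * z ^ (i + 1 - j))) i,
        Finset.sum_range_succ (fun j =>
        (dCoef q i (j + 1) s * ((q ^ 2)⁻¹) ^ (j + 1)) •
          (Om ^ (j + 1) * w ^ (s - (j + 1)) * z ^ (i + 1 - (j + 1)))) i]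
      rw [dCoef_eq_zero q (Nat.lt_succ_self i) s, zero_mul, zero_smul, add_zero, add_comm]
    rw [h3]
    have h4 : ∑ j ∈ Finset.range (i + 2),
        dCoef q (i + 1) j s • (Om ^ j * w ^ (s - j) * z ^ (i + 1 - j)) =
        dCoef q (i + 1) 0 s • (Om ^ 0 * w ^ (s - 0) * z ^ (i + 1 - 0)) +
          ∑ j ∈ Finset.range (i + 1),
            dCoef q (i + 1) (j + 1) s •
              (Om ^ (j + 1) * w ^ (s - (j + 1)) * z ^ (i + 1 - (j + 1))) := by
      rw [Finset.sum_range_succ' (fun j =>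
        dCoef q (i + 1) j s • (Om ^ j * w ^ (s - j) * z ^ (i + 1 - j))) (i + 1)]
      rw [add_comm]
    rw [h4, dCoef_zero_right q (i + 1), dCoef_zero_right q i, pow_zero, mul_one, add_assoc]
    congr 1
    rw [← Finset.sum_add_distrib]
    refine Finset.sum_congr rfl ?_
    intro j hj
    have hjle : j ≤ i := Nat.lt_succ_iff.mp (Finset.mem_range.mp hj)
    have hii : i + 1 - (j + 1) = i - j := by omega
    rw [hii, ← add_smul]
    congr 1
    rw [dCoef_rec]
    have e1 : ((q ^ 2)⁻¹ : ℂ) ^ (j + 1) = (q ^ (2 * (j + 1)))⁻¹ := by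
      rw [inv_pow, ← pow_mul]
    have e2 : ((q ^ 2)⁻¹ : ℂ) ^ j = (q ^ (2 * j))⁻¹ := by
      rw [inv_pow, ← pow_mul]
    have e3 : ((q ^ 2 : ℂ)) ^ (s - j) = q ^ (2 * (s - j)) := by
      rw [← pow_mul]
    rw [e1, e2, e3]
    ring

end Aux

/-- Lemma: `z_k^i (z_k^*)^s = (z_k^*)^s z_k^i + Σ_{j=1}^{i} d_{i,j}(s) Ω_{k+1}^j (z_k^*)^{s−j} z_k^{i−j}`. -/
theorem fq_power_power_commutation (N : ℕ) (hN : 1 ≤ N) (q : ℂ) (hq : q ≠ 0)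
    (k : Fin N) (i s : ℕ) (hi : 1 ≤ i) (his : i ≤ s) :
    zGen N q k ^ i * zsGen N q k ^ s =
      zsGen N q k ^ s * zGen N q k ^ i +
        ∑ j ∈ Finset.Icc 1 i,
          dCoef q i j s •
            (OmegaEl N q ((k : ℕ) + 1) ^ j * zsGen N q k ^ (s - j) * zGen N q k ^ (i - j)) := by
  have h := main_aux N q hq k s i his
  have hset : Finset.range (i + 1) = insert 0 (Finset.Icc 1 i) := by
    ext x
    simp only [Finset.mem_range, Finset.mem_insert, Finset.mem_Icc]
    omega
  rw [h, hset, Finset.sum_insert (by simp)]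
  congr 1
  simp [dCoef_zero_right]
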